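/- arXiv:2509.04410 — 6 statements merged into one kernel-verified Lean document; each statement's English description precedes it below -/
import Mathlib

section
/- Let T ≥ 2 and d ≥ 1 be integers, let u_0, …, u_{T−1} be d×d unitary matrices, and define the propagators U_{t:0} = u_{t−1}u_{t−2}⋯u_0 (with U_{0:0} = I). Define the periodic Feynman–Kitaev clock Hamiltonian on ℂ^d ⊗ ℂ^T by H = I − (1/2)∑_{t=0}^{T−1} (u_t ⊗ E_{t+1 mod T, t} + u_t† ⊗ E_{t, t+1 mod T}), where E_{s,t} denotes the T×T matrix unit with a 1 in entry (s,t). Suppose φ⃗ ∈ ℂ^d is a unit vector with U_{T:0}φ⃗ = e^{iφ}φ⃗ for some real φ (here U_{T:0} = u_{T−1}⋯u_0). Then for every k of the form k = 2πm/T with m an integer, the vector Ψ_{k,φ} = T^{−1/2} ∑_{t=0}^{T−1} e^{i(k−φ/T)t} (U_{t:0}φ⃗) ⊗ e_t (e_t the standard basis of ℂ^T) satisfies H Ψ_{k,φ} = (1 − cos(k − φ/T)) Ψ_{k,φ}. -/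
open Kronecker Complex Matrix

noncomputable section

/-- Forward propagator `U_{t:0} = u_{t-1} ⋯ u_0` (with `U_{0:0} = I`). -/
def fkProp {d : ℕ} (u : ℕ → Matrix (Fin d) (Fin d) ℂ) : ℕ → Matrix (Fin d) (Fin d) ℂ
  | 0 => 1
  | t + 1 => u t * fkProp u t

/-- Matrix unit `E_{s,t}` on the clock space `ℂ^T`. -/
def matUnit {T : ℕ} (s t : Fin T) : Matrix (Fin T) (Fin T) ℂ :=
  Matrix.single s t 1

/-- The periodic Feynman–Kitaev clock Hamiltonian
`H = I − (1/2)∑_t (u_t ⊗ E_{t+1,t} + u_t† ⊗ E_{t,t+1})` on `ℂ^d ⊗ ℂ^T`. -/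
def clockHam {d T : ℕ} [NeZero T] (u : ℕ → Matrix (Fin d) (Fin d) ℂ) :
    Matrix (Fin d × Fin T) (Fin d × Fin T) ℂ :=
  1 - (2⁻¹ : ℂ) • ∑ t : Fin T,
      ((u (t : ℕ)) ⊗ₖ matUnit (t + 1) t + (u (t : ℕ))ᴴ ⊗ₖ matUnit t (t + 1))

lemma my_sum_mulVec {n : Type*} [Fintype n] {ι : Type*} (s : Finset ι)
    (M : ι → Matrix n n ℂ) (v : n → ℂ) :
    (∑ i ∈ s, M i).mulVec v = ∑ i ∈ s, (M i).mulVec v := by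
  ext x
  simp only [Matrix.mulVec, dotProduct, Matrix.sum_apply, Finset.sum_apply, Finset.sum_mul]
  rw [Finset.sum_comm]

lemma kron_unit_mulVec {d T : ℕ} (A : Matrix (Fin d) (Fin d) ℂ) (a b : Fin T)
    (v : Fin d × Fin T → ℂ) (i : Fin d) (s : Fin T) :
    ((A ⊗ₖ matUnit a b).mulVec v) (i, s)
      = if s = a then A.mulVec (fun j => v (j, b)) i else 0 := by
  by_cases h : s = a
  · subst h
    simp [Matrix.mulVec, dotProduct, Fintype.sum_prod_type, matUnit,
      Matrix.single, mul_ite, ite_mul, eq_comm]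
  · simp [Matrix.mulVec, dotProduct, Fintype.sum_prod_type, matUnit,
      Matrix.single, mul_ite, ite_mul, Ne.symm h, h]


/-- If `U_{T:0} φ⃗ = e^{iφ} φ⃗` then the history state
`Ψ_{k,φ} = T^{-1/2} ∑_t e^{i(k−φ/T)t} (U_{t:0}φ⃗) ⊗ e_t` is an eigenvector of the
periodic clock Hamiltonian with eigenvalue `1 − cos(k − φ/T)`. -/
theorem periodic_clock_eigenvector
    (T d : ℕ) [NeZero T] (hT : 2 ≤ T) (hd : 1 ≤ d)
    (u : ℕ → Matrix (Fin d) (Fin d) ℂ)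
    (hu : ∀ t, t < T → u t ∈ Matrix.unitaryGroup (Fin d) ℂ)
    (φv : Fin d → ℂ) (hφv : ∑ i, Complex.normSq (φv i) = 1)
    (φ : ℝ) (hφ : (fkProp u T).mulVec φv = Complex.exp (Complex.I * φ) • φv)
    (k : ℝ) (m : ℤ) (hk : k = 2 * Real.pi * m / T)
    (Ψ : Fin d × Fin T → ℂ)
    (hΨ : Ψ = fun p => (Real.sqrt T : ℂ)⁻¹ *
        Complex.exp (Complex.I * (k - φ / T) * ((p.2 : ℕ) : ℝ)) *
        ((fkProp u (p.2 : ℕ)).mulVec φv) p.1) :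
    (clockHam u).mulVec Ψ = ((1 - Real.cos (k - φ / T) : ℝ) : ℂ) • Ψ := by
  have hT0 : (T : ℝ) ≠ 0 := Nat.cast_ne_zero.mpr (NeZero.ne T)
  set θ : ℝ := k - φ / T with hθ
  set f : ℕ → Fin d → ℂ :=
    fun n => ((Real.sqrt T : ℂ)⁻¹ * Complex.exp (Complex.I * θ * n)) •
      (fkProp u n).mulVec φv with hf
  have hΨf : Ψ = fun p => f (p.2 : ℕ) p.1 := by
    rw [hΨ]; funext p
    simp only [hf, hθ, Pi.smul_apply, smul_eq_mul, Complex.ofReal_sub, Complex.ofReal_div]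
    push_cast
    ring
  -- periodicity f T = f 0
  have key : Complex.exp (Complex.I * θ * T) * Complex.exp (Complex.I * φ) = 1 := by
    rw [← Complex.exp_add]
    have hreal : θ * T + φ = 2 * Real.pi * m := by
      rw [hθ, hk]; field_simp; ring
    have h2 := congrArg (Complex.ofReal) hreal
    push_cast at h2
    have harg : Complex.I * θ * T + Complex.I * φ = (m : ℂ) * (2 * Real.pi * Complex.I) := by
      linear_combination Complex.I * h2
    rw [harg, Complex.exp_int_mul_two_pi_mul_I]
  have hper : f T = f 0 := by
    funext j
    simp only [hf, hφ, Pi.smul_apply, smul_eq_mul, Nat.cast_zero, mul_zero,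
      Complex.exp_zero, mul_one]
    show (Real.sqrt T : ℂ)⁻¹ * Complex.exp (Complex.I * θ * T) * (Complex.exp (Complex.I * φ) * φv j)
        = (Real.sqrt T : ℂ)⁻¹ * ((fkProp u 0).mulVec φv j)
    rw [show fkProp u 0 = 1 from rfl, Matrix.one_mulVec]
    linear_combination (Real.sqrt T : ℂ)⁻¹ * φv j * key
  -- step forward
  have hstep : ∀ n : ℕ,
      (u n).mulVec (f n) = Complex.exp (-(Complex.I * θ)) • f (n + 1) := by
    intro n
    simp only [hf, Matrix.mulVec_smul]
    rw [Matrix.mulVec_mulVec]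
    show _ • ((u n * fkProp u n).mulVec φv) = _ • (_ • (fkProp u (n+1)).mulVec φv)
    rw [show fkProp u (n+1) = u n * fkProp u n from rfl, smul_smul]
    congr 1
    have e : Complex.exp (-(Complex.I * θ)) * Complex.exp (Complex.I * θ * ((n : ℂ) + 1))
        = Complex.exp (Complex.I * θ * n) := by
      rw [← Complex.exp_add]; congr 1; ring
    push_cast
    linear_combination -(Real.sqrt T : ℂ)⁻¹ * e
  -- step backward
  have hback : ∀ n : ℕ, n < T →
      (u n)ᴴ.mulVec (f (n + 1)) = Complex.exp (Complex.I * θ) • f n := by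
    intro n hn
    have hun : star (u n) * u n = 1 := Matrix.mem_unitaryGroup_iff'.mp (hu n hn)
    simp only [hf, Matrix.mulVec_smul]
    rw [show fkProp u (n+1) = u n * fkProp u n from rfl, Matrix.mulVec_mulVec,
      ← Matrix.star_eq_conjTranspose, ← mul_assoc, hun, one_mul, smul_smul]
    congr 1
    have e : Complex.exp (Complex.I * θ) * Complex.exp (Complex.I * θ * (n : ℂ))
        = Complex.exp (Complex.I * θ * ((n : ℂ) + 1)) := by
      rw [← Complex.exp_add]; congr 1; ring
    push_cast
    linear_combination -(Real.sqrt T : ℂ)⁻¹ * e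
  -- wraparound
  have hwrap : ∀ t : Fin T, f ((t : ℕ) + 1) = f (((t + 1 : Fin T) : ℕ)) := by
    intro t
    have h1 : ((1 : Fin T) : ℕ) = 1 := by
      rw [Fin.val_one']; exact Nat.mod_eq_of_lt (by omega)
    have hv : ((t + 1 : Fin T) : ℕ) = ((t : ℕ) + 1) % T := by rw [Fin.val_add, h1]
    rcases lt_or_eq_of_le (Nat.succ_le_of_lt t.isLt) with h | h
    · have h' : (t : ℕ) + 1 < T := h
      rw [hv, Nat.mod_eq_of_lt h']
    · have h' : (t : ℕ) + 1 = T := h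
      rw [hv, h', Nat.mod_self, hper]
  -- main computation
  funext p
  obtain ⟨i, s⟩ := p
  rw [hΨf]
  show (clockHam u).mulVec (fun p => f (p.2 : ℕ) p.1) (i, s) = _
  rw [clockHam, Matrix.sub_mulVec, Matrix.one_mulVec, Matrix.smul_mulVec,
    my_sum_mulVec]
  simp only [Pi.sub_apply, Pi.smul_apply, Finset.sum_apply, Matrix.add_mulVec,
    Pi.add_apply, kron_unit_mulVec, smul_eq_mul, Finset.sum_add_distrib]
  have hfwd : (∑ t : Fin T, if s = t + 1 then
      (u (t : ℕ)).mulVec (fun j => f ((t : ℕ)) j) i else 0)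
      = Complex.exp (-(Complex.I * θ)) * f (s : ℕ) i := by
    rw [Finset.sum_eq_single (s - 1)]
    · rw [if_pos (by rw [sub_add_cancel])]
      have := congrFun (hstep ((s - 1 : Fin T) : ℕ)) i
      rw [show (fun j => f ((s - 1 : Fin T) : ℕ) j) = f ((s - 1 : Fin T) : ℕ) from rfl, this,
        Pi.smul_apply, smul_eq_mul, congrFun (hwrap (s - 1)) i, sub_add_cancel]
    · intro t _ ht
      rw [if_neg]
      intro h
      exact ht (by rw [h]; rw [add_sub_cancel_right])
    · intro h; exact absurd (Finset.mem_univ _) h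
  have hbwd : (∑ t : Fin T, if s = t then
      (u (t : ℕ))ᴴ.mulVec (fun j => f (((t + 1 : Fin T) : ℕ)) j) i else 0)
      = Complex.exp (Complex.I * θ) * f (s : ℕ) i := by
    rw [Finset.sum_eq_single s]
    · rw [if_pos rfl]
      rw [show (fun j => f (((s + 1 : Fin T) : ℕ)) j) = f (((s + 1 : Fin T) : ℕ)) from rfl,
        ← hwrap s, congrFun (hback (s : ℕ) s.isLt) i, Pi.smul_apply, smul_eq_mul]
    · intro t _ ht
      rw [if_neg (fun h => ht h.symm)]
    · intro h; exact absurd (Finset.mem_univ _) h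
  rw [hfwd, hbwd]
  have hcos2 : ((Real.cos θ : ℝ) : ℂ) * 2
      = Complex.exp (Complex.I * θ) + Complex.exp (-(Complex.I * θ)) := by
    rw [Complex.ofReal_cos, Complex.cos]
    ring_nf
  simp only [Pi.smul_apply, smul_eq_mul, Complex.ofReal_sub, Complex.ofReal_one]
  linear_combination (2⁻¹ : ℂ) * f ((s : ℕ)) i * hcos2
end
end

section
/- Let T ≥ 2 and d ≥ 1 be integers, let u_0, …, u_{T−1} be d×d unitary matrices, U_{t:0} = u_{t−1}⋯u_0, and let H = I − (1/2)∑_{t=0}^{T−1} (u_t ⊗ E_{t+1 mod T, t} + u_t† ⊗ E_{t, t+1 mod T}) on ℂ^d ⊗ ℂ^T. Let {φ⃗_1, …, φ⃗_d} be an orthonormal basis of ℂ^d consisting of eigenvectors of U_{T:0}, with U_{T:0}φ⃗_j = e^{iφ_j}φ⃗_j. For k ∈ (2π/T)·{0,1,…,T−1} define Ψ_{k,φ_j} = T^{−1/2} ∑_{t=0}^{T−1} e^{i(k−φ_j/T)t} (U_{t:0}φ⃗_j) ⊗ e_t. Then the dT vectors {Ψ_{k,φ_j}} form an orthonormal basis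 of ℂ^d ⊗ ℂ^T; consequently H is Hermitian and every eigenvalue of H lies in the interval [0, 2]. -/
open Kronecker Complex Matrix

noncomputable section

/-- Hermitian inner product (conjugate-linear in the first slot). -/
def cinner {m : Type*} [Fintype m] (f g : m → ℂ) : ℂ :=
  ∑ z, (starRingEnd ℂ) (f z) * g z

/-! ### Auxiliary lemmas about `cinner` -/

lemma cinner_eq_inner {ι : Type*} [Fintype ι] (f g : ι → ℂ) :
    cinner f g = @inner ℂ (EuclideanSpace ℂ ι) _ (WithLp.toLp 2 f) (WithLp.toLp 2 g) := by
  simp [cinner, PiLp.inner_apply, RCLike.inner_apply, mul_comm]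

lemma cinner_eq_dot {ι : Type*} [Fintype ι] (f g : ι → ℂ) :
    cinner f g = star f ⬝ᵥ g := rfl

lemma cinner_conj_symm {ι : Type*} [Fintype ι] (f g : ι → ℂ) :
    (starRingEnd ℂ) (cinner f g) = cinner g f := by
  simp [cinner, map_sum, mul_comm]

lemma cinner_mulVec_unitary {n : Type*} [Fintype n] [DecidableEq n]
    (M : Matrix n n ℂ) (h : Mᴴ * M = 1) (x y : n → ℂ) :
    cinner (M *ᵥ x) (M *ᵥ y) = cinner x y := by
  rw [cinner_eq_dot, cinner_eq_dot, Matrix.star_mulVec, Matrix.dotProduct_mulVec,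
    Matrix.vecMul_vecMul, h, Matrix.vecMul_one]

lemma cinner_conjTranspose_right {n : Type*} [Fintype n] [DecidableEq n]
    (M : Matrix n n ℂ) (x y : n → ℂ) :
    cinner x (Mᴴ *ᵥ y) = (starRingEnd ℂ) (cinner y (M *ᵥ x)) := by
  rw [cinner_eq_dot, Matrix.dotProduct_mulVec, ← Matrix.star_mulVec, ← cinner_eq_dot,
    ← cinner_conj_symm]

lemma cinner_sub_right {ι : Type*} [Fintype ι] (x y z : ι → ℂ) :
    cinner x (y - z) = cinner x y - cinner x z := by
  simp [cinner, mul_sub, Finset.sum_sub_distrib]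

lemma cinner_add_right {ι : Type*} [Fintype ι] (x y z : ι → ℂ) :
    cinner x (y + z) = cinner x y + cinner x z := by
  simp [cinner, mul_add, Finset.sum_add_distrib]

lemma cinner_smul_right {ι : Type*} [Fintype ι] (a : ℂ) (x y : ι → ℂ) :
    cinner x (a • y) = a * cinner x y := by
  simp [cinner, Finset.mul_sum, mul_left_comm]

/-- Norm of a vector, via the Euclidean structure. -/
def enorm2 {ι : Type*} [Fintype ι] (v : ι → ℂ) : ℝ := ‖(WithLp.toLp 2 v : EuclideanSpace ℂ ι)‖

lemma cinner_self_eq {ι : Type*} [Fintype ι] (v : ι → ℂ) :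
    cinner v v = ((enorm2 v : ℝ) : ℂ) ^ 2 := by
  rw [cinner_eq_inner]
  exact inner_self_eq_norm_sq_to_K (𝕜 := ℂ) (E := EuclideanSpace ℂ ι) (WithLp.toLp 2 v)

lemma enorm_nonneg' {ι : Type*} [Fintype ι] (v : ι → ℂ) : 0 ≤ enorm2 v := norm_nonneg _

lemma enorm_pos_of_ne_zero {ι : Type*} [Fintype ι] {v : ι → ℂ} (hv : v ≠ 0) : 0 < enorm2 v := by
  rw [enorm2, norm_pos_iff]
  simpa using hv

lemma cinner_abs_le {ι : Type*} [Fintype ι] (x y : ι → ℂ) :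
    ‖cinner x y‖ ≤ enorm2 x * enorm2 y := by
  rw [cinner_eq_inner]
  exact norm_inner_le_norm (𝕜 := ℂ) (E := EuclideanSpace ℂ ι) (WithLp.toLp 2 x) (WithLp.toLp 2 y)

/-! ### Matrix lemmas -/

lemma fkProp_unitary {d T : ℕ} (u : ℕ → Matrix (Fin d) (Fin d) ℂ)
    (hu : ∀ t, t < T → u t ∈ Matrix.unitaryGroup (Fin d) ℂ) :
    ∀ t, t ≤ T → (fkProp u t)ᴴ * fkProp u t = 1 := by
  intro t
  induction t with
  | zero => intro _; simp [fkProp]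
  | succ n ih =>
    intro h
    have h1 : (u n)ᴴ * u n = 1 := by
      have := (Matrix.mem_unitaryGroup_iff').mp (hu n (by omega))
      simpa [Matrix.star_eq_conjTranspose] using this
    have h2 := ih (by omega)
    show (u n * fkProp u n)ᴴ * (u n * fkProp u n) = 1
    rw [Matrix.conjTranspose_mul, Matrix.mul_assoc, ← Matrix.mul_assoc (u n)ᴴ, h1,
      Matrix.one_mul, h2]

lemma kron_conjTranspose {l m n p : Type*} (A : Matrix l m ℂ) (B : Matrix n p ℂ) :
    (A ⊗ₖ B)ᴴ = Aᴴ ⊗ₖ Bᴴ := by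
  ext ⟨i, j⟩ ⟨k, l⟩
  simp [Matrix.conjTranspose_apply, Matrix.kroneckerMap_apply, mul_comm]

lemma matUnit_conjTranspose {T : ℕ} (s t : Fin T) : (matUnit s t)ᴴ = matUnit t s := by
  ext i j
  simp [matUnit, Matrix.conjTranspose_apply, Matrix.single, and_comm]

lemma sum_matUnit_diag {T : ℕ} : ∑ t : Fin T, matUnit t t = (1 : Matrix (Fin T) (Fin T) ℂ) := by
  ext i j
  rw [Matrix.sum_apply]
  simp only [matUnit]
  rcases eq_or_ne i j with h | h
  · subst h
    rw [Finset.sum_eq_single i (fun b _ hb =>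
      Matrix.single_apply_of_ne _ _ _ _ _ (by tauto)) (by simp)]
    simp [Matrix.one_apply]
  · rw [Finset.sum_eq_zero fun t _ => Matrix.single_apply_of_ne _ _ _ _ _
      (by rintro ⟨rfl, rfl⟩; exact h rfl)]
    simp [Matrix.one_apply, h]

/-- The (unitary) shift part of the clock Hamiltonian. -/
def shiftOp {d T : ℕ} [NeZero T] (u : ℕ → Matrix (Fin d) (Fin d) ℂ) :
    Matrix (Fin d × Fin T) (Fin d × Fin T) ℂ :=
  ∑ t : Fin T, (u (t : ℕ)) ⊗ₖ matUnit (t + 1) t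

lemma shiftOp_conjTranspose {d T : ℕ} [NeZero T] (u : ℕ → Matrix (Fin d) (Fin d) ℂ) :
    (shiftOp (T := T) u)ᴴ = ∑ t : Fin T, (u (t : ℕ))ᴴ ⊗ₖ matUnit t (t + 1) := by
  rw [shiftOp, Matrix.conjTranspose_sum]
  exact Finset.sum_congr rfl fun t _ => by rw [kron_conjTranspose, matUnit_conjTranspose]

lemma clockHam_eq {d T : ℕ} [NeZero T] (u : ℕ → Matrix (Fin d) (Fin d) ℂ) :
    clockHam (T := T) u = 1 - (2⁻¹ : ℂ) • (shiftOp (T := T) u + (shiftOp (T := T) u)ᴴ) := by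
  rw [clockHam, shiftOp_conjTranspose, shiftOp, ← Finset.sum_add_distrib]

lemma clockHam_isHermitian {d T : ℕ} [NeZero T] (u : ℕ → Matrix (Fin d) (Fin d) ℂ) :
    (clockHam (T := T) u).IsHermitian := by
  rw [clockHam_eq]
  unfold Matrix.IsHermitian
  rw [Matrix.conjTranspose_sub, Matrix.conjTranspose_smul, Matrix.conjTranspose_add,
    Matrix.conjTranspose_conjTranspose, Matrix.conjTranspose_one]
  norm_num [add_comm]

lemma shiftOp_unitary {d T : ℕ} [NeZero T] (u : ℕ → Matrix (Fin d) (Fin d) ℂ)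
    (hu : ∀ t, t < T → u t ∈ Matrix.unitaryGroup (Fin d) ℂ) :
    (shiftOp (T := T) u)ᴴ * shiftOp (T := T) u = 1 := by
  rw [shiftOp_conjTranspose, shiftOp, Finset.sum_mul_sum]
  have key : ∀ s t : Fin T, ((u (s : ℕ))ᴴ ⊗ₖ matUnit s (s + 1)) * ((u (t : ℕ)) ⊗ₖ matUnit (t + 1) t)
      = if s = t then (1 : Matrix (Fin d) (Fin d) ℂ) ⊗ₖ matUnit t t else 0 := by
    intro s t
    rw [matUnit, matUnit, ← Matrix.mul_kronecker_mul]
    rcases eq_or_ne s t with h | h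
    · subst h
      rw [if_pos rfl, Matrix.single_mul_single_same]
      have h1 : (u (s : ℕ))ᴴ * u (s : ℕ) = 1 := by
        have := (Matrix.mem_unitaryGroup_iff').mp (hu s s.isLt)
        simpa [Matrix.star_eq_conjTranspose] using this
      rw [h1, one_mul]
      rfl
    · rw [if_neg h, Matrix.single_mul_single_of_ne _ _ _ _ (by simpa using h)]
      exact Matrix.kroneckerMap_zero_right _ (fun a => mul_zero a) _
  calc (∑ s : Fin T, ∑ t : Fin T,
        ((u (s : ℕ))ᴴ ⊗ₖ matUnit s (s + 1)) * ((u (t : ℕ)) ⊗ₖ matUnit (t + 1) t))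
      = ∑ t : Fin T, (1 : Matrix (Fin d) (Fin d) ℂ) ⊗ₖ matUnit t t := by
        rw [Finset.sum_comm]
        refine Finset.sum_congr rfl fun t _ => ?_
        rw [Finset.sum_eq_single t (fun s _ hs => by rw [key, if_neg hs]) (by simp)]
        rw [key, if_pos rfl]
    _ = 1 := by
        ext ⟨i1, i2⟩ ⟨j1, j2⟩
        rw [Matrix.sum_apply]
        simp only [Matrix.kroneckerMap_apply]
        rw [← Finset.mul_sum]
        have h2 : ∑ t : Fin T, matUnit t t i2 j2 = (1 : Matrix (Fin T) (Fin T) ℂ) i2 j2 := by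
          rw [← sum_matUnit_diag (T := T), Matrix.sum_apply]
        rw [h2]
        simp [Matrix.one_apply, Prod.ext_iff, ite_and]
        split <;> simp

/-! ### Spectrum bound -/

lemma clockHam_mem_spectrum {d T : ℕ} [NeZero T] (u : ℕ → Matrix (Fin d) (Fin d) ℂ)
    (hu : ∀ t, t < T → u t ∈ Matrix.unitaryGroup (Fin d) ℂ) :
    ∀ μ ∈ spectrum ℂ (clockHam (T := T) u), ∃ r : ℝ, μ = (r : ℂ) ∧ 0 ≤ r ∧ r ≤ 2 := by
  intro μ hμ
  rw [spectrum.mem_iff, Matrix.isUnit_iff_isUnit_det, isUnit_iff_ne_zero, not_ne_iff] at hμ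
  obtain ⟨v, hv0, hv⟩ := Matrix.exists_mulVec_eq_zero_iff.mpr hμ
  have hHv : clockHam (T := T) u *ᵥ v = μ • v := by
    rw [Matrix.sub_mulVec, Algebra.algebraMap_eq_smul_one, Matrix.smul_mulVec,
      Matrix.one_mulVec, sub_eq_zero] at hv
    exact hv.symm
  have hA : (shiftOp (T := T) u)ᴴ * shiftOp (T := T) u = 1 := shiftOp_unitary u hu
  have hcpos : 0 < enorm2 v := enorm_pos_of_ne_zero hv0
  have hAv : enorm2 (shiftOp (T := T) u *ᵥ v) = enorm2 v := by
    have h1 : ((enorm2 (shiftOp (T := T) u *ᵥ v) : ℝ) : ℂ) ^ 2 = ((enorm2 v : ℝ) : ℂ) ^ 2 := by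
      rw [← cinner_self_eq, ← cinner_self_eq, cinner_mulVec_unitary _ hA]
    have h2 : (enorm2 (shiftOp (T := T) u *ᵥ v)) ^ 2 = (enorm2 v) ^ 2 := by exact_mod_cast h1
    nlinarith [enorm_nonneg' (shiftOp (T := T) u *ᵥ v), enorm_nonneg' v]
  have hzabs : ‖cinner v (shiftOp (T := T) u *ᵥ v)‖ ≤ (enorm2 v) ^ 2 := by
    calc ‖cinner v (shiftOp (T := T) u *ᵥ v)‖
        ≤ enorm2 v * enorm2 (shiftOp (T := T) u *ᵥ v) := cinner_abs_le _ _
      _ = (enorm2 v) ^ 2 := by rw [hAv]; ring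
  have hre : |(cinner v (shiftOp (T := T) u *ᵥ v)).re| ≤ (enorm2 v) ^ 2 :=
    le_trans (Complex.abs_re_le_norm _) hzabs
  have h2 : cinner v (clockHam (T := T) u *ᵥ v)
      = cinner v v - 2⁻¹ * (cinner v (shiftOp (T := T) u *ᵥ v)
        + (starRingEnd ℂ) (cinner v (shiftOp (T := T) u *ᵥ v))) := by
    rw [clockHam_eq, Matrix.sub_mulVec, Matrix.smul_mulVec, Matrix.add_mulVec,
      Matrix.one_mulVec, cinner_sub_right, cinner_smul_right, cinner_add_right,
      cinner_conjTranspose_right]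
  have h1 : μ * cinner v v = cinner v v - 2⁻¹ * (cinner v (shiftOp (T := T) u *ᵥ v)
        + (starRingEnd ℂ) (cinner v (shiftOp (T := T) u *ᵥ v))) := by
    rw [← cinner_smul_right, ← hHv, h2]
  rw [Complex.add_conj, cinner_self_eq] at h1
  have hcC : ((enorm2 v : ℝ) : ℂ) ≠ 0 := by exact_mod_cast ne_of_gt hcpos
  refine ⟨((enorm2 v) ^ 2 - (cinner v (shiftOp (T := T) u *ᵥ v)).re) / (enorm2 v) ^ 2, ?_, ?_, ?_⟩
  · push_cast
    rw [eq_div_iff (pow_ne_zero 2 hcC)]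
    push_cast at h1
    linear_combination h1
  · apply div_nonneg _ (by positivity)
    linarith [(abs_le.mp hre).2]
  · rw [div_le_iff₀ (by positivity)]
    linarith [(abs_le.mp hre).1]

lemma sum_conj_mul {n : Type*} [Fintype n] (a b : ℂ) (w w' : n → ℂ) :
    ∑ i, (starRingEnd ℂ) (a * w i) * (b * w' i)
      = (starRingEnd ℂ) a * b * ∑ i, (starRingEnd ℂ) (w i) * w' i := by
  rw [Finset.mul_sum]
  exact Finset.sum_congr rfl fun i _ => by simp only [_root_.map_mul]; ring

lemma zeta_pow (T : ℕ) [NeZero T] (m m' : Fin T) :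
    (Complex.exp (Complex.I * (2 * (Real.pi : ℂ) * (((m' : ℕ) : ℂ) - ((m : ℕ) : ℂ)) / T))) ^ T
      = 1 := by
  rw [← Complex.exp_nat_mul]
  have hTC : (T : ℂ) ≠ 0 := Nat.cast_ne_zero.mpr (NeZero.ne T)
  have h : (T : ℂ) * (Complex.I * (2 * (Real.pi : ℂ) * (((m' : ℕ) : ℂ) - ((m : ℕ) : ℂ)) / T))
      = ((((m' : ℕ) : ℤ) - ((m : ℕ) : ℤ) : ℤ) : ℂ) * (2 * (Real.pi : ℂ) * Complex.I) := by
    push_cast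
    field_simp
  rw [h, Complex.exp_int_mul_two_pi_mul_I]

lemma zeta_ne_one (T : ℕ) [NeZero T] {m m' : Fin T} (hm : m ≠ m') :
    Complex.exp (Complex.I * (2 * (Real.pi : ℂ) * (((m' : ℕ) : ℂ) - ((m : ℕ) : ℂ)) / T)) ≠ 1 := by
  intro h
  obtain ⟨n, hn⟩ := Complex.exp_eq_one_iff.mp h
  have hTC : (T : ℂ) ≠ 0 := Nat.cast_ne_zero.mpr (NeZero.ne T)
  have hne : (2 * (Real.pi : ℂ) * Complex.I) ≠ 0 := by
    simp [Complex.I_ne_zero, Real.pi_ne_zero, Complex.ofReal_ne_zero]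
  have key : (((m' : ℕ) : ℂ) - ((m : ℕ) : ℂ)) = (n : ℂ) * T := by
    refine mul_left_cancel₀ hne ?_
    field_simp at hn
    linear_combination (2 * (Real.pi : ℂ) * Complex.I) * hn
  have hZ : ((m' : ℕ) : ℤ) - ((m : ℕ) : ℤ) = n * T := by exact_mod_cast key
  have h1 : ((m : ℕ) : ℤ) < T := by exact_mod_cast m.isLt
  have h1' : ((m' : ℕ) : ℤ) < T := by exact_mod_cast m'.isLt
  have h0 : (0 : ℤ) ≤ ((m : ℕ) : ℤ) := Int.natCast_nonneg _
  have h0' : (0 : ℤ) ≤ ((m' : ℕ) : ℤ) := Int.natCast_nonneg _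
  have hT0 : (0 : ℤ) < T := by exact_mod_cast Nat.pos_of_ne_zero (NeZero.ne T)
  have hn1 : n < 1 := by
    have h2 : n * T < 1 * T := by rw [one_mul, ← hZ]; omega
    exact lt_of_mul_lt_mul_right h2 (le_of_lt hT0)
  have hn2 : -1 < n := by
    have h2 : -1 * T < n * T := by rw [neg_one_mul, ← hZ]; omega
    exact lt_of_mul_lt_mul_right h2 (le_of_lt hT0)
  have hn0 : n = 0 := by omega
  subst hn0
  rw [zero_mul, sub_eq_zero] at hZ
  exact hm (Fin.ext (by omega)).symm

/-- Given an orthonormal eigenbasis `φ⃗_j` of `U_{T:0}`, the `dT` states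
`Ψ_{k,φ_j}` form an orthonormal basis of `ℂ^d ⊗ ℂ^T`; consequently `H` is Hermitian and
every eigenvalue of `H` lies in `[0,2]`. -/
theorem periodic_clock_spectrum
    (T d : ℕ) [NeZero T] (hT : 2 ≤ T) (hd : 1 ≤ d)
    (u : ℕ → Matrix (Fin d) (Fin d) ℂ)
    (hu : ∀ t, t < T → u t ∈ Matrix.unitaryGroup (Fin d) ℂ)
    (φv : Fin d → (Fin d → ℂ))
    (hON : ∀ i j, cinner (φv i) (φv j) = if i = j then 1 else 0)
    (φ : Fin d → ℝ)
    (hφ : ∀ j, (fkProp u T).mulVec (φv j) = Complex.exp (Complex.I * φ j) • φv j)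
    (Ψ : Fin T × Fin d → (Fin d × Fin T → ℂ))
    (hΨ : ∀ m : Fin T, ∀ j : Fin d, Ψ (m, j) = fun p =>
        (Real.sqrt T : ℂ)⁻¹ *
        Complex.exp (Complex.I * ((2 * Real.pi * (m : ℕ) / T) - φ j / T) * ((p.2 : ℕ) : ℝ)) *
        ((fkProp u (p.2 : ℕ)).mulVec (φv j)) p.1) :
    (∀ a b : Fin T × Fin d, cinner (Ψ a) (Ψ b) = if a = b then 1 else 0) ∧
    Submodule.span ℂ (Set.range Ψ) = ⊤ ∧
    (clockHam (T := T) u).IsHermitian ∧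
    ∀ μ ∈ spectrum ℂ (clockHam (T := T) u), ∃ r : ℝ, μ = (r : ℂ) ∧ 0 ≤ r ∧ r ≤ 2 := by
  have hTC : (T : ℂ) ≠ 0 := Nat.cast_ne_zero.mpr (NeZero.ne T)
  have hsq : ((Real.sqrt T : ℝ) : ℂ)⁻¹ * ((Real.sqrt T : ℝ) : ℂ)⁻¹ = (T : ℂ)⁻¹ := by
    rw [← mul_inv, ← Complex.ofReal_mul, Real.mul_self_sqrt (Nat.cast_nonneg T)]
    push_cast
    ring
  have orth : ∀ a b : Fin T × Fin d, cinner (Ψ a) (Ψ b) = if a = b then 1 else 0 := by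
    rintro ⟨m, j⟩ ⟨m', j'⟩
    rw [hΨ, hΨ]
    simp only [cinner]
    rw [Fintype.sum_prod_type, Finset.sum_comm]
    simp only [Prod.fst, Prod.snd]
    trans (∑ t : Fin T,
      (starRingEnd ℂ) ((Real.sqrt T : ℂ)⁻¹ *
          Complex.exp (Complex.I * (2 * (Real.pi : ℂ) * ((m : ℕ) : ℂ) / T
            - ((φ j : ℝ) : ℂ) / T) * (((t : ℕ) : ℝ) : ℂ))) *
        ((Real.sqrt T : ℂ)⁻¹ *
          Complex.exp (Complex.I * (2 * (Real.pi : ℂ) * ((m' : ℕ) : ℂ) / T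
            - ((φ j' : ℝ) : ℂ) / T) * (((t : ℕ) : ℝ) : ℂ))) *
        (if j = j' then 1 else 0))
    · refine Finset.sum_congr rfl fun t _ => ?_
      rw [sum_conj_mul,
        show (∑ i, (starRingEnd ℂ) ((fkProp u (t : ℕ) *ᵥ φv j) i) * ((fkProp u (t : ℕ) *ᵥ φv j') i))
          = cinner (fkProp u (t : ℕ) *ᵥ φv j) (fkProp u (t : ℕ) *ᵥ φv j') from rfl,
        cinner_mulVec_unitary _ (fkProp_unitary u hu _ (le_of_lt t.isLt)), hON]
    · by_cases hj : j = j'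
      · subst hj
        simp only [eq_self_iff_true, if_true, mul_one]
        trans (∑ t : Fin T, (T : ℂ)⁻¹ *
          (Complex.exp (Complex.I * (2 * (Real.pi : ℂ)
            * (((m' : ℕ) : ℂ) - ((m : ℕ) : ℂ)) / T))) ^ (t : ℕ))
        · refine Finset.sum_congr rfl fun t _ => ?_
          rw [_root_.map_mul, ← Complex.exp_conj, map_inv₀, Complex.conj_ofReal,
            mul_mul_mul_comm, hsq, ← Complex.exp_add, ← Complex.exp_nat_mul]
          congr 1
          simp only [_root_.map_mul, map_sub, map_div₀, Complex.conj_I, Complex.conj_ofReal,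
            map_ofNat, Complex.conj_natCast]
          push_cast
          ring
        · rcases eq_or_ne m m' with hm | hm
          · subst hm
            simp only [sub_self, mul_zero, zero_div, Complex.exp_zero, one_pow, mul_one,
              Finset.sum_const, Finset.card_univ, Fintype.card_fin, nsmul_eq_mul]
            rw [mul_inv_cancel₀ hTC]
            simp
          · rw [← Finset.mul_sum,
              Fin.sum_univ_eq_sum_range (fun n => (Complex.exp (Complex.I * (2 * (Real.pi : ℂ)
                * (((m' : ℕ) : ℂ) - ((m : ℕ) : ℂ)) / T))) ^ n) T,
              geom_sum_eq (zeta_ne_one T hm) T, zeta_pow, sub_self, zero_div, mul_zero]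
            symm
            simp [Prod.ext_iff, hm]
      · simp [hj, Prod.ext_iff]
  haveI : Nonempty (Fin T × Fin d) := ⟨(⟨0, by omega⟩, ⟨0, by omega⟩)⟩
  have hO : Orthonormal ℂ (fun a => (WithLp.toLp 2 (Ψ a) : EuclideanSpace ℂ (Fin d × Fin T))) := by
    rw [orthonormal_iff_ite]
    intro a b
    rw [← cinner_eq_inner]
    exact orth a b
  have hli : LinearIndependent ℂ Ψ := hO.linearIndependent.map'
    (WithLp.linearEquiv 2 ℂ (Fin d × Fin T → ℂ)).toLinearMap (WithLp.linearEquiv 2 ℂ _).ker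
  refine ⟨orth, hli.span_eq_top_of_card_eq_finrank ?_, clockHam_isHermitian u,
    clockHam_mem_spectrum u hu⟩
  simp [Module.finrank_pi, Fintype.card_prod, Nat.mul_comm]
end
end

section
/- For all integers n ≥ 2 and ℓ with 1 ≤ ℓ ≤ n/2, one has ln( n² / (ℓ² + (n−ℓ)²) ) ≥ (2 ln 2) · ℓ / n. -/
/-!
With `t = 2ℓ/n ∈ [0, 1]` the quotient `n² / (ℓ² + (n - ℓ)²)` is at least `1 + t`, and the
Bernoulli inequality `2 ^ t ≤ 1 + t` gives `log (1 + t) ≥ t log 2`.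
-/

open Real

lemma mul_log_two_le_log_one_add {t : ℝ} (ht₀ : 0 ≤ t) (ht₁ : t ≤ 1) :
    t * log 2 ≤ log (1 + t) := by
  have bernoulli : (2 : ℝ) ^ t ≤ 1 + t := by
    simpa [one_add_one_eq_two] using
      rpow_one_add_le_one_add_mul_self (s := 1) (by norm_num) ht₀ ht₁
  calc t * log 2 = log ((2 : ℝ) ^ t) := (log_rpow two_pos t).symm
    _ ≤ log (1 + t) := log_le_log (by positivity) bernoulli

lemma sq_add_sub_sq_pos {x y : ℝ} (hy : 0 < y) : 0 < x ^ 2 + (y - x) ^ 2 := by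
  nlinarith [sq_nonneg (2 * x - y)]

lemma one_add_two_mul_div_le_sq_div {x y : ℝ} (hy : 0 < y) (hxy : 2 * x ≤ y) :
    1 + 2 * x / y ≤ y ^ 2 / (x ^ 2 + (y - x) ^ 2) := by
  rw [le_div_iff₀ (sq_add_sub_sq_pos hy), ← sub_nonneg]
  have key : y ^ 2 - (1 + 2 * x / y) * (x ^ 2 + (y - x) ^ 2) = 2 * x ^ 2 * (y - 2 * x) / y := by
    field_simp
    ring
  rw [key]
  have hgap : 0 ≤ y - 2 * x := by linarith
  positivity

theorem log_purity_factor_bound_general (n ℓ : ℕ) (hn : 2 ≤ n) (hhalf : 2 * ℓ ≤ n) :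
    Real.log ((n : ℝ) ^ 2 / ((ℓ : ℝ) ^ 2 + ((n : ℝ) - (ℓ : ℝ)) ^ 2)) ≥
      2 * Real.log 2 * (ℓ : ℝ) / (n : ℝ) := by
  have hn₀ : (0 : ℝ) < n := by exact_mod_cast (by omega : 0 < n)
  have hhalf' : 2 * (ℓ : ℝ) ≤ n := by exact_mod_cast hhalf
  calc 2 * log 2 * ℓ / n = 2 * ℓ / n * log 2 := by ring
    _ ≤ log (1 + 2 * ℓ / n) :=
      mul_log_two_le_log_one_add (by positivity) ((div_le_one hn₀).2 hhalf')
    _ ≤ log ((n : ℝ) ^ 2 / ((ℓ : ℝ) ^ 2 + ((n : ℝ) - ℓ) ^ 2)) :=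
      log_le_log (by positivity) (one_add_two_mul_div_le_sq_div hn₀ hhalf')

/-- For integers `n ≥ 2` and `1 ≤ ℓ ≤ n/2`,
`ln(n² / (ℓ² + (n−ℓ)²)) ≥ (2 ln 2)·ℓ/n`. -/
theorem log_purity_factor_bound (n ℓ : ℕ) (hn : 2 ≤ n) (hℓ : 1 ≤ ℓ) (hhalf : 2 * ℓ ≤ n) :
    Real.log ((n : ℝ) ^ 2 / ((ℓ : ℝ) ^ 2 + ((n : ℝ) - (ℓ : ℝ)) ^ 2)) ≥
      2 * Real.log 2 * (ℓ : ℝ) / (n : ℝ) :=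
  log_purity_factor_bound_general n ℓ hn hhalf
end

section
/- Let n ≥ 2 and a_1, …, a_{n−1} ∈ 𝔽₂. On ℂ^{𝔽₂ⁿ} (the n-qubit space with basis vectors e_z indexed by bitstrings z ∈ 𝔽₂ⁿ), define for 0 ≤ i ≤ n−2 the gates SWAP_{i,i+1} (e_z ↦ e_{z′} with z′ obtained from z by exchanging bits i and i+1) and CNOT_{i,i+1} (e_z ↦ e_{z′} with z′_{i+1} = z_{i+1} + z_i and z′_j = z_j otherwise). Let U = [(CNOT_{n−2,n−1})^{a_{n−1}} SWAP_{n−2,n−1}] ⋯ [(CNOT_{1,2})^{a_2} SWAP_{1,2}] [(CNOT_{0,1})^{a_1} SWAP_{0,1}] (the i = 0 factor acting first). Then for every z ∈ 𝔽₂ⁿ, U e_z = e_{αz}, where α : 𝔽₂ⁿ → 𝔽₂ⁿ is the 𝔽₂-linear map given by (αz)_i = z_{i+1} for 0 ≤ i ≤ n−2 and (αz)_{n−1} = z_0 + ∑_{i=1}^{n−1} a_i z_i. -/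
open Complex
open Fin.NatCast

noncomputable section

/-- The permutation matrix `P_σ` with `P_σ e_z = e_{σ z}`. -/
def permMatrix {V : Type*} [Fintype V] [DecidableEq V] (σ : V → V) : Matrix V V ℂ :=
  Matrix.of fun w z => if w = σ z then 1 else 0

/-- Exchange bits `i` and `j` of a configuration. -/
def swapBits {n : ℕ} (i j : Fin n) (z : Fin n → ZMod 2) : Fin n → ZMod 2 :=
  fun s => if s = i then z j else if s = j then z i else z s

/-- CNOT update with control `i` and target `j`: add bit `i` onto bit `j`. -/
def cnotBits {n : ℕ} (i j : Fin n) (z : Fin n → ZMod 2) : Fin n → ZMod 2 :=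
  fun s => if s = j then z j + z i else z s

/-- The LFSR staircase circuit
`U = [(CNOT_{n−2,n−1})^{a_{n−1}} SWAP_{n−2,n−1}] ⋯ [(CNOT_{0,1})^{a_1} SWAP_{0,1}]`,
with the `i = 0` factor acting first. -/
def lfsrCircuit (n : ℕ) [NeZero n] (a : ℕ → ZMod 2) :
    Matrix (Fin n → ZMod 2) (Fin n → ZMod 2) ℂ :=
  (((List.range (n - 1)).reverse.map fun i =>
      (if a (i + 1) = 1 then permMatrix (cnotBits (i : Fin n) ((i + 1 : ℕ) : Fin n)) else 1) *
        permMatrix (swapBits (i : Fin n) ((i + 1 : ℕ) : Fin n))).prod)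

/-- The LFSR update map `α` : shift all bits back by one, and feed
`z_0 + ∑_{i=1}^{n−1} a_i z_i` into position `n−1`. -/
def lfsrMap (n : ℕ) [NeZero n] (a : ℕ → ZMod 2) (z : Fin n → ZMod 2) : Fin n → ZMod 2 :=
  fun s => if h : (s : ℕ) + 1 < n then z ⟨(s : ℕ) + 1, h⟩
    else z 0 + ∑ i ∈ Finset.Ico 1 n, a i * z ((i : ℕ) : Fin n)

lemma permMatrix_mulVec_single {V : Type*} [Fintype V] [DecidableEq V] (σ : V → V) (z : V) :
    (permMatrix σ).mulVec (Pi.single z 1) = Pi.single (σ z) 1 := by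
  ext w
  simp [permMatrix, Matrix.mulVec, dotProduct, Pi.single_apply]

/-- One step of the staircase circuit as a function on configurations. -/
def stepFun (n : ℕ) [NeZero n] (a : ℕ → ZMod 2) (i : ℕ) (z : Fin n → ZMod 2) :
    Fin n → ZMod 2 :=
  if a (i + 1) = 1 then
    cnotBits (i : Fin n) ((i + 1 : ℕ) : Fin n) (swapBits (i : Fin n) ((i + 1 : ℕ) : Fin n) z)
  else swapBits (i : Fin n) ((i + 1 : ℕ) : Fin n) z

lemma factor_mulVec (n : ℕ) [NeZero n] (a : ℕ → ZMod 2) (i : ℕ) (z : Fin n → ZMod 2) :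
    ((if a (i + 1) = 1 then permMatrix (cnotBits (i : Fin n) ((i + 1 : ℕ) : Fin n)) else 1) *
        permMatrix (swapBits (i : Fin n) ((i + 1 : ℕ) : Fin n))).mulVec (Pi.single z 1)
      = Pi.single (stepFun n a i z) 1 := by
  rw [← Matrix.mulVec_mulVec, permMatrix_mulVec_single, stepFun]
  split
  · rw [permMatrix_mulVec_single]
  · rw [Matrix.one_mulVec]

/-- State after the first `k` steps. -/
def partialFun (n : ℕ) [NeZero n] (a : ℕ → ZMod 2) (k : ℕ) (z : Fin n → ZMod 2) :
    Fin n → ZMod 2 :=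
  fun s => if (s : ℕ) < k then z (((s : ℕ) + 1 : ℕ) : Fin n)
    else if (s : ℕ) = k then z 0 + ∑ i ∈ Finset.Ico 1 (k + 1), a i * z ((i : ℕ) : Fin n)
    else z s

lemma partialFun_zero (n : ℕ) [NeZero n] (a : ℕ → ZMod 2) (z : Fin n → ZMod 2) :
    partialFun n a 0 z = z := by
  funext s
  simp only [partialFun, Nat.not_lt_zero, if_false]
  split
  · next h =>
    have : s = 0 := Fin.ext (by simpa using h)
    simp [this]
  · rfl

lemma stepFun_partialFun (n : ℕ) [NeZero n] (a : ℕ → ZMod 2) (k : ℕ) (hk : k + 1 < n)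
    (z : Fin n → ZMod 2) :
    stepFun n a k (partialFun n a k z) = partialFun n a (k + 1) z := by
  have hkn : k < n := Nat.lt_of_succ_lt hk
  have hvk : (((k : ℕ) : Fin n) : ℕ) = k := Fin.val_cast_of_lt hkn
  have hvk1 : (((k + 1 : ℕ) : Fin n) : ℕ) = k + 1 := Fin.val_cast_of_lt hk
  -- evaluation of the swapped configuration
  have w_at : ∀ t : Fin n,
      swapBits (k : Fin n) ((k + 1 : ℕ) : Fin n) (partialFun n a k z) t
        = if (t : ℕ) < k + 1 then z (((t : ℕ) + 1 : ℕ) : Fin n)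
          else if (t : ℕ) = k + 1 then
            z 0 + ∑ i ∈ Finset.Ico 1 (k + 1), a i * z ((i : ℕ) : Fin n)
          else z t := by
    intro t
    simp only [swapBits, partialFun]
    rcases eq_or_ne (t : ℕ) k with h0 | h0
    · have ht : t = ((k : ℕ) : Fin n) := Fin.ext (h0.trans hvk.symm)
      rw [if_pos ht, if_neg (by rw [hvk1]; omega), if_neg (by rw [hvk1]; omega),
        if_pos (by omega)]
      congr 1
      exact Fin.ext (by rw [h0])
    · rcases eq_or_ne (t : ℕ) (k + 1) with h1 | h1
      · have ht : t = ((k + 1 : ℕ) : Fin n) := Fin.ext (h1.trans hvk1.symm)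
        have ht' : t ≠ ((k : ℕ) : Fin n) := by
          intro h; apply h0; rw [h, hvk]
        rw [if_neg ht', if_pos ht, if_neg (by rw [hvk]; omega), if_pos hvk,
          if_neg (by omega), if_pos h1]
      · have ht : t ≠ ((k : ℕ) : Fin n) := by
          intro h; apply h0; rw [h, hvk]
        have ht' : t ≠ ((k + 1 : ℕ) : Fin n) := by
          intro h; apply h1; rw [h, hvk1]
        rw [if_neg ht, if_neg ht']
        rcases lt_or_ge (t : ℕ) k with h | h
        · rw [if_pos h, if_pos (by omega)]
        · rw [if_neg (by omega), if_neg h0, if_neg (by omega), if_neg h1]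
  -- the swapped configuration agrees with `partialFun (k+1)` away from position `k+1`
  have main : ∀ t : Fin n, (t : ℕ) ≠ k + 1 →
      swapBits (k : Fin n) ((k + 1 : ℕ) : Fin n) (partialFun n a k z) t
        = partialFun n a (k + 1) z t := by
    intro t ht
    rw [w_at]
    simp only [partialFun]
    rcases lt_or_ge (t : ℕ) (k + 1) with h | h
    · rw [if_pos h, if_pos h]
    · rw [if_neg (by omega), if_neg ht, if_neg (by omega), if_neg ht]
  have wk1 : swapBits (k : Fin n) ((k + 1 : ℕ) : Fin n) (partialFun n a k z)
      ((k + 1 : ℕ) : Fin n)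
      = z 0 + ∑ i ∈ Finset.Ico 1 (k + 1), a i * z ((i : ℕ) : Fin n) := by
    rw [w_at, hvk1, if_neg (by omega), if_pos rfl]
  have wk : swapBits (k : Fin n) ((k + 1 : ℕ) : Fin n) (partialFun n a k z) ((k : ℕ) : Fin n)
      = z ((k + 1 : ℕ) : Fin n) := by
    rw [w_at, hvk, if_pos (by omega)]
  have pk1 : partialFun n a (k + 1) z ((k + 1 : ℕ) : Fin n)
      = z 0 + ∑ i ∈ Finset.Ico 1 (k + 1 + 1), a i * z ((i : ℕ) : Fin n) := by
    simp only [partialFun]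
    rw [hvk1, if_neg (by omega), if_pos rfl]
  have hsplit : ∑ i ∈ Finset.Ico 1 (k + 1 + 1), a i * z ((i : ℕ) : Fin n)
      = (∑ i ∈ Finset.Ico 1 (k + 1), a i * z ((i : ℕ) : Fin n))
        + a (k + 1) * z ((k + 1 : ℕ) : Fin n) :=
    Finset.sum_Ico_succ_top (by omega) _
  funext s
  rw [stepFun]
  split
  · next ha =>
    simp only [cnotBits]
    rcases eq_or_ne s ((k + 1 : ℕ) : Fin n) with rfl | h2
    · rw [if_pos rfl, wk1, wk, pk1, hsplit, ha, one_mul]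
      ring
    · rw [if_neg h2]
      exact main s (fun h => h2 (Fin.ext (by rw [h, hvk1])))
  · next ha =>
    have ha0 : a (k + 1) = 0 := by
      have h2 : ∀ x : ZMod 2, x = 0 ∨ x = 1 := by decide
      rcases h2 (a (k + 1)) with h | h
      · exact h
      · exact absurd h ha
    rcases eq_or_ne s ((k + 1 : ℕ) : Fin n) with rfl | h2
    · rw [wk1, pk1, hsplit, ha0, zero_mul, add_zero]
    · exact main s (fun h => h2 (Fin.ext (by rw [h, hvk1])))

lemma partial_prod (n : ℕ) [NeZero n] (a : ℕ → ZMod 2) (z : Fin n → ZMod 2)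
    (k : ℕ) (hk : k ≤ n - 1) :
    (((List.range k).reverse.map fun i =>
      (if a (i + 1) = 1 then permMatrix (cnotBits (i : Fin n) ((i + 1 : ℕ) : Fin n)) else 1) *
        permMatrix (swapBits (i : Fin n) ((i + 1 : ℕ) : Fin n))).prod).mulVec (Pi.single z 1)
      = Pi.single (partialFun n a k z) 1 := by
  induction k with
  | zero =>
    simp only [List.range_zero, List.reverse_nil, List.map_nil, List.prod_nil,
      Matrix.one_mulVec, partialFun_zero]
  | succ k ih =>
    have hk' : k ≤ n - 1 := Nat.le_of_succ_le hk
    have hkn : k + 1 < n := by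
      have hn1 : 1 ≤ n := Nat.one_le_iff_ne_zero.mpr (NeZero.ne n)
      omega
    rw [List.range_succ, List.reverse_append, List.reverse_singleton, List.singleton_append,
      List.map_cons, List.prod_cons, ← Matrix.mulVec_mulVec, ih hk', factor_mulVec,
      stepFun_partialFun n a k hkn]

/-- The staircase SWAP/CNOT circuit implements the LFSR update rule on the
computational basis: `U e_z = e_{αz}`. -/
theorem lfsr_circuit_basis_action
    (n : ℕ) [NeZero n] (hn : 2 ≤ n) (a : ℕ → ZMod 2) (z : Fin n → ZMod 2) :
    (lfsrCircuit n a).mulVec (Pi.single z 1) = Pi.single (lfsrMap n a z) 1 := by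
  rw [lfsrCircuit, partial_prod n a z (n - 1) le_rfl]
  have heq : partialFun n a (n - 1) z = lfsrMap n a z := by
    funext s
    have hs : (s : ℕ) < n := s.isLt
    have hn1 : (n - 1) + 1 = n := by omega
    simp only [partialFun, lfsrMap, hn1]
    rcases lt_or_ge (s : ℕ) (n - 1) with h | h
    · rw [if_pos h, dif_pos (by omega)]
      congr 1
      exact Fin.ext (Fin.val_cast_of_lt (by omega))
    · have hse : (s : ℕ) = n - 1 := by omega
      rw [if_neg (by omega), if_pos hse, dif_neg (by omega)]
  rw [heq]
end
end

section
/- Let n ≥ 2, N = 2ⁿ − 1, F the finite field with 2ⁿ elements, g a generator of F^×, ω = exp(2πi/N), and ψ_q ∈ ℂ^F given by ψ_q(0) = 0, ψ_q(g^j) = ω^{qj}/√N. For v ∈ F define the operator Z_v on ℂ^F by (Z_v f)(z) = (−1)^{Tr_{F/𝔽₂}(vz)} f(z), where Tr_{F/𝔽₂} is the field trace. Then for every v ≠ 0 and all integers q, q′ with q ≢ 0 and q′ ≢ 0 (mod N): (a) ⟨ψ_q, Z_v ψ_q⟩ = −1/(2ⁿ − 1); and (b) if q ≢ q′ (mod N),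 then |⟨ψ_q, Z_v ψ_{q′}⟩| = 2^{n/2}/(2ⁿ − 1). -/
open Complex

noncomputable section

/-- The sign `(−1)^s` of a bit `s ∈ 𝔽₂`. -/
def bitSign (s : ZMod 2) : ℂ := if s = 0 then 1 else -1

lemma bitSign_add (s t : ZMod 2) : bitSign (s + t) = bitSign s * bitSign t := by
  have h : ∀ u : ZMod 2, u = 0 ∨ u = 1 := by decide
  rcases h s with hs | hs <;> rcases h t with ht | ht <;> subst hs <;> subst ht <;>
    simp [bitSign, show (1 : ZMod 2) + 1 = 0 by decide, show (1 : ZMod 2) ≠ 0 by decide]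

lemma conj_bitSign (s : ZMod 2) : (starRingEnd ℂ) (bitSign s) = bitSign s := by
  unfold bitSign; split <;> simp

lemma bitSign_ne_zero_eq (s : ZMod 2) (hs : s ≠ 0) : bitSign s = -1 := by
  unfold bitSign; simp [hs]

/-- For the `Z`-type Pauli operators `(Z_v f)(z) = (−1)^{Tr(vz)} f(z)` on the
chi states: (a) diagonal matrix elements equal `−1/(2ⁿ−1)`, and (b) off-diagonal matrix
elements have absolute value `2^{n/2}/(2ⁿ−1)`. -/
theorem z_pauli_matrix_elements
    (n : ℕ) (hn : 2 ≤ n) (N : ℕ) (hN : N = 2 ^ n - 1)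
    (F : Type*) [Field F] [Fintype F] [DecidableEq F] [Algebra (ZMod 2) F]
    (hcard : Fintype.card F = 2 ^ n)
    (g : Fˣ) (hg : ∀ x : Fˣ, x ∈ Subgroup.zpowers g)
    (ω : ℂ) (hω : ω = Complex.exp (2 * Real.pi * Complex.I / N))
    (q q' : ℤ) (hq : ¬ (N : ℤ) ∣ q) (hq' : ¬ (N : ℤ) ∣ q')
    (ψq ψq' : F → ℂ)
    (hψq0 : ψq 0 = 0)
    (hψq : ∀ j : ℕ, ψq ((g ^ j : Fˣ) : F) = ω ^ (q * j) / Real.sqrt N)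
    (hψq'0 : ψq' 0 = 0)
    (hψq' : ∀ j : ℕ, ψq' ((g ^ j : Fˣ) : F) = ω ^ (q' * j) / Real.sqrt N)
    (v : F) (hv : v ≠ 0) :
    (∑ z : F, (starRingEnd ℂ) (ψq z) *
        (bitSign (Algebra.trace (ZMod 2) F (v * z)) * ψq z)) = -1 / ((2 : ℂ) ^ n - 1) ∧
    (¬ (N : ℤ) ∣ (q - q') →
      ‖(∑ z : F, (starRingEnd ℂ) (ψq z) *
          (bitSign (Algebra.trace (ZMod 2) F (v * z)) * ψq' z))‖ =
        (2 : ℝ) ^ ((n : ℝ) / 2) / (2 ^ n - 1)) := by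
  classical
  -- numerics about N
  have h4 : 4 ≤ 2 ^ n := by
    calc (4 : ℕ) = 2 ^ 2 := rfl
    _ ≤ 2 ^ n := Nat.pow_le_pow_right (by norm_num) hn
  have hN3 : 3 ≤ N := by omega
  have hN0 : N ≠ 0 := by omega
  haveI : NeZero N := ⟨hN0⟩
  have hNC : (N : ℂ) = 2 ^ n - 1 := by
    subst hN; push_cast [Nat.one_le_two_pow]; ring
  have hNR : (N : ℝ) = 2 ^ n - 1 := by
    subst hN; push_cast [Nat.one_le_two_pow]; ring
  have hNCne : (N : ℂ) ≠ 0 := Nat.cast_ne_zero.mpr hN0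
  -- characteristic 2
  have hinjalg : Function.Injective (algebraMap (ZMod 2) F) := (algebraMap (ZMod 2) F).injective
  haveI hF2 : CharP F 2 := charP_of_injective_algebraMap hinjalg 2
  -- order of g
  have hcardU : Fintype.card Fˣ = N := by
    rw [Fintype.card_units, hcard, hN]
  have hog : orderOf g = N := by
    rw [orderOf_eq_card_of_forall_mem_zpowers hg, Nat.card_eq_fintype_card, hcardU]
  have hgprim : IsPrimitiveRoot g N := by
    rw [← hog]; exact IsPrimitiveRoot.orderOf g
  -- ω facts
  have hωprim : IsPrimitiveRoot ω N := by
    rw [hω]; exact Complex.isPrimitiveRoot_exp N hN0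
  have hωabs : ‖ω‖ = 1 := by
    have h1 : (2 * (Real.pi : ℂ) * Complex.I / N) = ((2 * Real.pi / N : ℝ) : ℂ) * Complex.I := by
      push_cast; ring
    rw [hω, h1, Complex.norm_exp_ofReal_mul_I]
  have hω0 : ω ≠ 0 := by
    intro h; rw [h] at hωabs; simp at hωabs
  have hωconj : (starRingEnd ℂ) ω = ω⁻¹ := (Complex.inv_eq_conj hωabs).symm
  -- the additive character
  set ψ₀ : AddChar F ℂ :=
    { toFun := fun z => bitSign (Algebra.trace (ZMod 2) F z)
      map_zero_eq_one' := by simp [bitSign]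
      map_add_eq_mul' := by intro a b; simp only [map_add]; exact bitSign_add _ _ } with hψ₀def
  set ψv : AddChar F ℂ := ψ₀.mulShift v with hψvdef
  have hψv : ∀ z : F, ψv z = bitSign (Algebra.trace (ZMod 2) F (v * z)) := fun z => rfl
  -- nontriviality of ψv
  haveI : Module.Finite (ZMod 2) F := Module.Finite.of_finite
  have htrne : Algebra.trace (ZMod 2) F ≠ 0 := Algebra.trace_ne_zero (ZMod 2) F
  obtain ⟨c, hc⟩ : ∃ c : F, Algebra.trace (ZMod 2) F c ≠ 0 := by
    by_contra hcon
    push_neg at hcon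
    exact htrne (LinearMap.ext fun x => hcon x)
  have hψvne : ψv ≠ 1 := by
    intro h
    have hb : ψv (v⁻¹ * c) = 1 := by rw [h]; rfl
    rw [hψv, ← mul_assoc, mul_inv_cancel₀ hv, one_mul,
      bitSign_ne_zero_eq _ hc] at hb
    norm_num at hb
  have hprim : ψv.IsPrimitive := AddChar.IsPrimitive.of_ne_one hψvne
  have hψvsum : ∑ z : F, ψv z = 0 := by
    rw [AddChar.sum_eq_zero_iff_ne_zero]
    exact hψvne
  -- reindexing nonzero elements by powers of g
  have himg : (Finset.univ.erase (0 : F)) =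
      (Finset.range N).image (fun j => ((g ^ j : Fˣ) : F)) := by
    ext z
    simp only [Finset.mem_erase, Finset.mem_univ, and_true, Finset.mem_image, Finset.mem_range]
    constructor
    · intro hz
      have hx := hg (Units.mk0 z hz)
      rw [(isOfFinOrder_of_finite _).mem_zpowers_iff_mem_range_orderOf] at hx
      simp only [Finset.mem_image, Finset.mem_range, hog] at hx
      obtain ⟨j, hj, hgj⟩ := hx
      exact ⟨j, hj, by rw [hgj]; rfl⟩
    · rintro ⟨j, hj, rfl⟩
      exact Units.ne_zero _
  have hinj : ∀ i ∈ Finset.range N, ∀ j ∈ Finset.range N,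
      ((g ^ i : Fˣ) : F) = ((g ^ j : Fˣ) : F) → i = j := by
    intro i hi j hj hij
    have h1 : (g : Fˣ) ^ i = g ^ j := Units.ext hij
    exact pow_injOn_Iio_orderOf
      (by simpa [hog, Set.mem_Iio] using Finset.mem_range.mp hi)
      (by simpa [hog, Set.mem_Iio] using Finset.mem_range.mp hj) h1
  have hbij' : ∀ f : F → ℂ, ∑ z ∈ Finset.univ.erase (0 : F), f z =
      ∑ j ∈ Finset.range N, f ((g ^ j : Fˣ) : F) := by
    intro f
    rw [himg, Finset.sum_image hinj]
  have hbij : ∀ f : F → ℂ, f 0 = 0 →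
      ∑ z : F, f z = ∑ j ∈ Finset.range N, f ((g ^ j : Fˣ) : F) := by
    intro f hf
    rw [← hbij' f, ← Finset.sum_erase_add Finset.univ f (Finset.mem_univ (0 : F)), hf, add_zero]
  -- sqrt N facts
  have hsNpos : (0 : ℝ) < Real.sqrt N := Real.sqrt_pos.mpr (by positivity)
  have hsN : ((Real.sqrt N : ℝ) : ℂ) ≠ 0 := by
    exact_mod_cast hsNpos.ne'
  have hsq : ((Real.sqrt N : ℝ) : ℂ) * ((Real.sqrt N : ℝ) : ℂ) = (N : ℂ) := by
    rw [← Complex.ofReal_mul, Real.mul_self_sqrt (Nat.cast_nonneg N)]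
    norm_num
  -- the key reduction
  have hkey : ∀ (c : ℤ) (ψ' : F → ℂ), ψ' 0 = 0 →
      (∀ j : ℕ, ψ' ((g ^ j : Fˣ) : F) = ω ^ (c * j) / Real.sqrt N) →
      ∑ z : F, (starRingEnd ℂ) (ψq z) *
          (bitSign (Algebra.trace (ZMod 2) F (v * z)) * ψ' z) =
        (1 / (N : ℂ)) * ∑ j ∈ Finset.range N, ω ^ ((c - q) * j) * ψv ((g ^ j : Fˣ) : F) := by
    intro c ψ' h0 hval
    rw [hbij _ (by rw [hψq0]; simp), Finset.mul_sum]
    refine Finset.sum_congr rfl fun j hj => ?_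
    rw [hψq j, hval j, ← hψv]
    have hconj : (starRingEnd ℂ) (ω ^ (q * j) / ((Real.sqrt N : ℝ) : ℂ)) =
        ω ^ (-(q * j)) / ((Real.sqrt N : ℝ) : ℂ) := by
      rw [map_div₀, Complex.conj_ofReal, map_zpow₀, hωconj, inv_zpow, ← zpow_neg]
    rw [hconj]
    have hexp : ((c - q) * j : ℤ) = c * j + -(q * j) := by ring
    rw [hexp, zpow_add₀ hω0]
    have haux : ∀ A B C s : ℂ, s ≠ 0 → A / s * (C * (B / s)) = 1 / (s * s) * (B * A * C) := by
      intro A B C s hs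
      field_simp
    rw [haux _ _ _ _ hsN, hsq]
  -- PART (a)
  have parta : (∑ z : F, (starRingEnd ℂ) (ψq z) *
      (bitSign (Algebra.trace (ZMod 2) F (v * z)) * ψq z)) = -1 / ((2 : ℂ) ^ n - 1) := by
    rw [hkey q ψq hψq0 hψq]
    have h1 : ∑ j ∈ Finset.range N, ω ^ ((q - q) * j) * ψv ((g ^ j : Fˣ) : F) =
        ∑ j ∈ Finset.range N, ψv ((g ^ j : Fˣ) : F) := by
      refine Finset.sum_congr rfl fun j hj => ?_
      simp [sub_self]
    have h2 : ∑ j ∈ Finset.range N, ψv ((g ^ j : Fˣ) : F) = -1 := by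
      rw [← hbij' (fun z => ψv z)]
      have h3 := Finset.sum_erase_add Finset.univ (fun z => ψv z) (Finset.mem_univ (0 : F))
      rw [hψvsum] at h3
      have h4 : ψv (0 : F) = 1 := by rw [AddChar.map_zero_eq_one]
      simp only [h4] at h3
      linear_combination h3
    rw [h1, h2, ← hNC]
    ring
  refine ⟨parta, ?_⟩
  -- PART (b)
  intro hqq'
  set m : ℤ := q' - q with hm
  have hmnd : ¬ (N : ℤ) ∣ m := by
    intro h
    exact hqq' (by simpa [hm] using h.neg_right)
  -- construct the multiplicative character
  set ωu : ℂˣ := Units.mk0 ω hω0 with hωu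
  set u : ℂˣ := ωu ^ m with hu
  have huval : (u : ℂ) = ω ^ m := by
    rw [hu]; simp [hωu]
  have hωN : ω ^ (N : ℕ) = 1 := hωprim.pow_eq_one
  have huN : u ^ (N : ℕ) = 1 := by
    apply Units.ext
    push_cast [huval]
    rw [← zpow_natCast (ω ^ m) N, ← zpow_mul, mul_comm m (N : ℤ), zpow_mul, zpow_natCast, hωN,
      one_zpow]
  set f : ℤ →+ Additive ℂˣ := zmultiplesHom (Additive ℂˣ) (Additive.ofMul u) with hf
  have hfN : f (N : ℤ) = 0 := by
    rw [hf]
    simp only [zmultiplesHom_apply]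
    rw [← ofMul_zpow, zpow_natCast, huN]
    rfl
  set φ₀ : ZMod N →+ Additive ℂˣ := ZMod.lift N ⟨f, hfN⟩ with hφ₀
  set eg := hgprim.zmodEquivZPowers with heg
  set χu : Fˣ →* ℂˣ := MonoidHom.mk'
    (fun x => Additive.toMul (φ₀ (eg.symm (Additive.ofMul (⟨x, hg x⟩ : Subgroup.zpowers g)))))
    (by
      intro x y
      have hxy : (⟨x * y, hg (x * y)⟩ : Subgroup.zpowers g) = ⟨x, hg x⟩ * ⟨y, hg y⟩ := rfl
      rw [hxy, ofMul_mul, map_add, map_add, toMul_add]) with hχu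
  set χ : MulChar F ℂ := MulChar.ofUnitHom χu with hχ
  have hχcoe : ∀ j : ℕ, χ ((g ^ j : Fˣ) : F) = ω ^ (m * j) := by
    intro j
    rw [hχ, MulChar.ofUnitHom_coe]
    show ((Additive.toMul (φ₀ (eg.symm (Additive.ofMul
      (⟨g ^ j, hg (g ^ j)⟩ : Subgroup.zpowers g)))) : ℂˣ) : ℂ) = ω ^ (m * j)
    have h2 : eg.symm (Additive.ofMul (⟨g ^ j, hg (g ^ j)⟩ : Subgroup.zpowers g)) =
        ((j : ℕ) : ZMod N) := hgprim.zmodEquivZPowers_symm_apply_pow j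
    rw [h2]
    have h3 : ((j : ℕ) : ZMod N) = ((j : ℤ) : ZMod N) := by push_cast; rfl
    rw [h3, hφ₀, ZMod.lift_coe]
    show ((Additive.toMul ((j : ℤ) • Additive.ofMul u) : ℂˣ) : ℂ) = ω ^ (m * j)
    rw [← ofMul_zpow]
    show ((u ^ (j : ℤ) : ℂˣ) : ℂ) = ω ^ (m * j)
    push_cast [huval]
    rw [← zpow_mul]
  have hχ0 : χ (0 : F) = 0 := by rw [MulChar.map_zero]
  have hχne : χ ≠ 1 := by
    intro h
    have h1 := hχcoe 1
    rw [h, MulChar.one_apply_coe] at h1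
    have h2 : ω ^ (m * (1 : ℕ)) = 1 := h1.symm
    rw [(hωprim.zpow_eq_one_iff_dvd _)] at h2
    simp only [Nat.cast_one, mul_one] at h2
    exact hmnd h2
  -- the Gauss sum
  have hgauss : gaussSum χ ψv = ∑ j ∈ Finset.range N, ω ^ (m * j) * ψv ((g ^ j : Fˣ) : F) := by
    show ∑ a : F, χ a * ψv a = _
    rw [hbij (fun a => χ a * ψv a) (by show χ 0 * ψv 0 = 0; rw [hχ0, zero_mul])]
    exact Finset.sum_congr rfl fun j hj => by rw [hχcoe j]
  -- conjugate of Gauss sum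
  have hψvconj : ∀ z : F, (starRingEnd ℂ) (ψv z) = ψv z := fun z => by
    rw [hψv]; exact conj_bitSign _
  have hGconj : (starRingEnd ℂ) (gaussSum χ ψv) = gaussSum χ⁻¹ ψv⁻¹ := by
    have hL : (starRingEnd ℂ) (gaussSum χ ψv) =
        ∑ j ∈ Finset.range N, ω ^ (-(m * j)) * ψv ((g ^ j : Fˣ) : F) := by
      show (starRingEnd ℂ) (∑ a : F, χ a * ψv a) = _
      rw [map_sum, hbij (fun a => (starRingEnd ℂ) (χ a * ψv a))
        (by show (starRingEnd ℂ) (χ 0 * ψv 0) = 0; rw [hχ0, zero_mul, map_zero])]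
      refine Finset.sum_congr rfl fun j hj => ?_
      rw [map_mul, hψvconj, hχcoe j, map_zpow₀, hωconj, inv_zpow, ← zpow_neg]
    have hR : gaussSum χ⁻¹ ψv⁻¹ =
        ∑ j ∈ Finset.range N, ω ^ (-(m * j)) * ψv ((g ^ j : Fˣ) : F) := by
      show ∑ a : F, χ⁻¹ a * ψv⁻¹ a = _
      rw [hbij (fun a => χ⁻¹ a * ψv⁻¹ a) (by show χ⁻¹ 0 * ψv⁻¹ 0 = 0; rw [MulChar.map_zero, zero_mul])]
      refine Finset.sum_congr rfl fun j hj => ?_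
      rw [MulChar.inv_apply_eq_inv', hχcoe j, AddChar.inv_apply, CharTwo.neg_eq, ← zpow_neg]
    rw [hL, hR]
  have hcard2 : gaussSum χ ψv * (starRingEnd ℂ) (gaussSum χ ψv) = ((2 : ℂ)) ^ n := by
    rw [hGconj, gaussSum_mul_gaussSum_eq_card hχne hprim, hcard]
    push_cast
    ring
  have habs2 : ‖gaussSum χ ψv‖ ^ 2 = (2 : ℝ) ^ n := by
    have h1 := hcard2
    rw [Complex.mul_conj] at h1
    have h2 : (Complex.normSq (gaussSum χ ψv) : ℝ) = (2 : ℝ) ^ n := by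
      exact_mod_cast h1
    rw [Complex.sq_norm]
    exact h2
  have hGabs : ‖gaussSum χ ψv‖ = (2 : ℝ) ^ ((n : ℝ) / 2) := by
    have h2 : ((2 : ℝ) ^ ((n : ℝ) / 2)) ^ 2 = (2 : ℝ) ^ n := by
      rw [← Real.rpow_natCast ((2 : ℝ) ^ ((n : ℝ) / 2)) 2,
        ← Real.rpow_mul (by norm_num : (0:ℝ) ≤ 2)]
      norm_num [Real.rpow_natCast]
    rw [← Real.sqrt_sq (norm_nonneg (gaussSum χ ψv)), habs2, ← h2,
      Real.sqrt_sq (Real.rpow_nonneg (by norm_num) _)]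
  -- conclude
  rw [hkey q' ψq' hψq'0 hψq']
  have hsum : ∑ j ∈ Finset.range N, ω ^ ((q' - q) * j) * ψv ((g ^ j : Fˣ) : F) =
      gaussSum χ ψv := by rw [hgauss]
  rw [hsum]
  rw [norm_mul, hGabs]
  have habsN : ‖1 / (N : ℂ)‖ = 1 / (N : ℝ) := by
    rw [norm_div, norm_one, Complex.norm_natCast]
  rw [habsN, hNR]
  ring
end
end

section
/- Let n ≥ 2, N = 2ⁿ − 1, F the finite field with 2ⁿ elements, g a generator of F^×, ω = exp(2πi/N), and ψ_q ∈ ℂ^F given by ψ_q(0) = 0, ψ_q(g^j) = ω^{qj}/√N. For u ∈ F define the operator X_u on ℂ^F by (X_u f)(z) = f(z + u). Then for every u ≠ 0 and all integers q, q′ with q ≢ 0 and q′ ≢ 0 (mod N): (a) |⟨ψ_q, X_u ψ_q⟩| = 1/(2ⁿ − 1); and (b) if q ≢ q′ (mod N), then |⟨ψ_q, X_u ψ_{q′}⟩| = 2^{n/2}/(2ⁿ − 1). -/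
open Complex

noncomputable section

private lemma exists_char' {F : Type*} [Field F] [Fintype F] [DecidableEq F]
    {N : ℕ} (hNcard : Fintype.card Fˣ = N) (hN0 : N ≠ 0)
    {g : Fˣ} (hg : ∀ x : Fˣ, x ∈ Subgroup.zpowers g)
    {ω : ℂ} (hωprim : IsPrimitiveRoot ω N) (q : ℤ) :
    ∃ χ : MulChar F ℂ, χ (g : F) = ω ^ q ∧
      ∀ j : ℕ, χ ((g ^ j : Fˣ) : F) = ω ^ (q * (j : ℤ)) := by
  have hω0 : ω ≠ 0 := hωprim.ne_zero hN0
  set ωu : ℂˣ := Units.mk0 ω hω0 with hωu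
  have hmem : ωu ^ q ∈ rootsOfUnity (Fintype.card Fˣ) ℂ := by
    rw [_root_.mem_rootsOfUnity, hNcard]
    ext
    push_cast
    show ((ω : ℂ) ^ q) ^ (N : ℤ) = 1
    rw [← zpow_mul, mul_comm, zpow_mul, zpow_natCast, hωprim.pow_eq_one, one_zpow]
  refine ⟨MulChar.ofRootOfUnity hmem hg, ?_, ?_⟩
  · rw [MulChar.ofRootOfUnity_spec]
    simp [hωu]
  · intro j
    have h1 : ((g ^ j : Fˣ) : F) = ((g : Fˣ) : F) ^ j := by push_cast; ring
    rw [h1, map_pow, MulChar.ofRootOfUnity_spec]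
    simp only [hωu, Units.val_zpow_eq_zpow_val, Units.val_mk0]
    rw [← zpow_natCast (ω ^ q), ← zpow_mul]


/-- For the `X`-type Pauli operators `(X_u f)(z) = f(z + u)` on the chi
states: (a) diagonal matrix elements have absolute value `1/(2ⁿ−1)`, and (b) off-diagonal
matrix elements have absolute value `2^{n/2}/(2ⁿ−1)`. -/
theorem x_pauli_matrix_elements
    (n : ℕ) (hn : 2 ≤ n) (N : ℕ) (hN : N = 2 ^ n - 1)
    (F : Type*) [Field F] [Fintype F] [DecidableEq F]
    (hcard : Fintype.card F = 2 ^ n)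
    (g : Fˣ) (hg : ∀ x : Fˣ, x ∈ Subgroup.zpowers g)
    (ω : ℂ) (hω : ω = Complex.exp (2 * Real.pi * Complex.I / N))
    (q q' : ℤ) (hq : ¬ (N : ℤ) ∣ q) (hq' : ¬ (N : ℤ) ∣ q')
    (ψq ψq' : F → ℂ)
    (hψq0 : ψq 0 = 0)
    (hψq : ∀ j : ℕ, ψq ((g ^ j : Fˣ) : F) = ω ^ (q * j) / Real.sqrt N)
    (hψq'0 : ψq' 0 = 0)
    (hψq' : ∀ j : ℕ, ψq' ((g ^ j : Fˣ) : F) = ω ^ (q' * j) / Real.sqrt N)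
    (u : F) (hu : u ≠ 0) :
    ‖∑ z : F, (starRingEnd ℂ) (ψq z) * ψq (z + u)‖ = 1 / (2 ^ n - 1) ∧
    (¬ (N : ℤ) ∣ (q - q') →
      ‖∑ z : F, (starRingEnd ℂ) (ψq z) * ψq' (z + u)‖ =
        (2 : ℝ) ^ ((n : ℝ) / 2) / (2 ^ n - 1)) := by
  classical
  -- numerics
  have h2n : 4 ≤ 2 ^ n := by
    calc (4 : ℕ) = 2 ^ 2 := rfl
    _ ≤ 2 ^ n := Nat.pow_le_pow_right (by norm_num) hn
  have hN0 : N ≠ 0 := by omega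
  have hNcard : Fintype.card Fˣ = N := by rw [Fintype.card_units, hcard, hN]
  have hωprim : IsPrimitiveRoot ω N := hω ▸ Complex.isPrimitiveRoot_exp N hN0
  -- characteristic two
  have h2 : (2 : F) = 0 := by
    have hc : ((2 ^ n : ℕ) : F) = 0 := by
      rw [← hcard]; exact FiniteField.cast_card_eq_zero F
    push_cast at hc
    exact pow_eq_zero_iff (by omega) |>.mp hc
  -- the characters
  obtain ⟨χ, hχg, hχj⟩ := exists_char' hNcard hN0 hg hωprim q
  obtain ⟨χ', hχ'g, hχ'j⟩ := exists_char' hNcard hN0 hg hωprim q'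
  -- nontriviality criterion
  have hnt : ∀ (r : ℤ) (ψ : MulChar F ℂ), ψ (g : F) = ω ^ r → ¬ (N : ℤ) ∣ r → ψ ≠ 1 := by
    intro r ψ hψg hr h1
    rw [MulChar.eq_iff hg, hψg, MulChar.one_apply_coe] at h1
    exact hr (hωprim.zpow_eq_one_iff_dvd r |>.mp h1)
  have hχ1 : χ ≠ 1 := hnt q χ hχg hq
  have hχ'1 : χ' ≠ 1 := hnt q' χ' hχ'g hq'
  -- every nonzero element is a natural power of g
  have hog : orderOf g = N := by
    rw [orderOf_eq_card_of_forall_mem_zpowers hg, Nat.card_eq_fintype_card, hNcard]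
  have hpow : ∀ x : F, x ≠ 0 → ∃ j : ℕ, x = ((g ^ j : Fˣ) : F) := by
    intro x hx
    obtain ⟨k, hk⟩ := hg (Units.mk0 x hx)
    simp only at hk
    refine ⟨(k % (N : ℤ)).toNat, ?_⟩
    have hNz : (0 : ℤ) < (N : ℤ) := by exact_mod_cast Nat.pos_of_ne_zero hN0
    have h1 : g ^ ((k % (N : ℤ)).toNat) = Units.mk0 x hx := by
      have h2' := zpow_mod_orderOf g k
      rw [hog] at h2'
      rw [← zpow_natCast, Int.toNat_of_nonneg (Int.emod_nonneg _ hNz.ne'), h2', hk]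
    rw [h1, Units.val_mk0]
  -- relation ψ = χ / √N
  have hrel : ∀ (r : ℤ) (ψ : F → ℂ) (χr : MulChar F ℂ), ψ 0 = 0 →
      (∀ j : ℕ, ψ ((g ^ j : Fˣ) : F) = ω ^ (r * j) / Real.sqrt N) →
      (∀ j : ℕ, χr ((g ^ j : Fˣ) : F) = ω ^ (r * (j : ℤ))) →
      ∀ x : F, ψ x = χr x / (Real.sqrt N : ℂ) := by
    intro r ψ χr hψ0 hψj hχrj x
    by_cases hx : x = 0
    · rw [hx, hψ0, MulChar.map_nonunit χr (by simp), zero_div]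
    · obtain ⟨j, hj⟩ := hpow x hx
      rw [hj, hψj j, hχrj j]
  have hrelq := hrel q ψq χ hψq0 hψq hχj
  have hrelq' := hrel q' ψq' χ' hψq'0 hψq' hχ'j
  -- absolute value of character values
  have habs1 : ∀ (ψ : MulChar F ℂ) (x : F), x ≠ 0 → ‖ψ x‖ = 1 := by
    intro ψ x hx
    have hx1 : x ^ Fintype.card Fˣ = 1 := by
      rw [Fintype.card_units]; exact FiniteField.pow_card_sub_one_eq_one x hx
    have h1 : ψ x ^ Fintype.card Fˣ = 1 := by rw [← map_pow, hx1, map_one]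
    exact Complex.norm_eq_one_of_pow_eq_one h1 (by rw [hNcard]; exact hN0)
  -- the master computation
  have hmaster : ∀ (ψ₁ ψ₂ : F → ℂ) (χ₁ χ₂ : MulChar F ℂ),
      (∀ x, ψ₁ x = χ₁ x / (Real.sqrt N : ℂ)) →
      (∀ x, ψ₂ x = χ₂ x / (Real.sqrt N : ℂ)) →
      ‖∑ z : F, (starRingEnd ℂ) (ψ₁ z) * ψ₂ (z + u)‖ =
        ‖jacobiSum χ₁⁻¹ χ₂‖ / N := by
    intro ψ₁ ψ₂ χ₁ χ₂ h₁ h₂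
    have hNC : ((Real.sqrt N : ℂ)) * ((Real.sqrt N : ℂ)) = (N : ℂ) := by
      rw [← Complex.ofReal_mul, Real.mul_self_sqrt (Nat.cast_nonneg N)]
      norm_num
    have step1 : (∑ z : F, (starRingEnd ℂ) (ψ₁ z) * ψ₂ (z + u)) =
        (∑ z : F, χ₁⁻¹ z * χ₂ (z + u)) / (N : ℂ) := by
      rw [Finset.sum_div]
      refine Finset.sum_congr rfl fun z _ => ?_
      have hc : (starRingEnd ℂ) (χ₁ z) = χ₁⁻¹ z := MulChar.star_apply' χ₁ z
      rw [h₁ z, h₂ (z + u), map_div₀, Complex.conj_ofReal, hc, div_mul_div_comm, hNC]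
    have step2 : (∑ z : F, χ₁⁻¹ z * χ₂ (z + u)) =
        (χ₁⁻¹ u * χ₂ u) * jacobiSum χ₁⁻¹ χ₂ := by
      rw [jacobiSum, Finset.mul_sum]
      refine (Fintype.sum_bijective (fun x => u * x) (mulLeft_bijective₀ u hu) _ _
        fun x => ?_).symm
      have hx1 : (1 : F) - x = x + 1 := by linear_combination (-x) * h2
      rw [show u * x + u = u * (x + 1) by ring, map_mul, map_mul, hx1]
      ring
    rw [step1, step2, norm_div, norm_mul, norm_mul]
    have hau : ‖χ₁⁻¹ u‖ = 1 := habs1 χ₁⁻¹ u hu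
    have hau' : ‖χ₂ u‖ = 1 := habs1 χ₂ u hu
    rw [hau, hau', one_mul, one_mul, Complex.norm_natCast]
  have hNR : ((N : ℝ)) = 2 ^ n - 1 := by
    rw [hN]; push_cast [Nat.one_le_two_pow]; ring
  constructor
  · -- part (a)
    rw [hmaster ψq ψq χ χ hrelq hrelq]
    have hJ : jacobiSum χ⁻¹ χ = -(χ⁻¹ (-1)) := by
      have := jacobiSum_nontrivial_inv (χ := χ⁻¹) (by simpa using hχ1)
      rwa [inv_inv] at this
    have hm1 : (-1 : F) = 1 := by linear_combination -h2
    rw [hJ, hm1, MulChar.map_one, norm_neg, norm_one, hNR]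
  · -- part (b)
    intro hqq
    rw [hmaster ψq ψq' χ χ' hrelq hrelq']
    have hprod1 : χ⁻¹ * χ' ≠ 1 := by
      refine hnt (q' - q) (χ⁻¹ * χ') ?_ ?_
      · rw [MulChar.mul_apply, MulChar.inv_apply_eq_inv', hχg, hχ'g, ← zpow_neg, ← zpow_add₀
          (hωprim.ne_zero hN0)]
        ring_nf
      · intro hdvd
        exact hqq (dvd_sub_comm.mp hdvd)
    -- |J|² = 2^n
    have hrc2 : ringChar F = 2 := by
      exact ((Nat.dvd_prime Nat.prime_two).mp
        (ringChar.dvd (by exact_mod_cast h2))).resolve_left CharP.ringChar_ne_one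
    have hrcne : ringChar ℂ ≠ ringChar F := by
      rw [hrc2, ringChar.eq_zero]
      norm_num
    set J := jacobiSum χ⁻¹ χ' with hJdef
    have hsc : ∀ ψ : MulChar F ℂ, ψ.ringHomComp (starRingEnd ℂ) = ψ⁻¹ :=
      fun ψ => MulChar.star_eq_inv ψ
    have hconj : (starRingEnd ℂ) J = jacobiSum (χ⁻¹)⁻¹ χ'⁻¹ := by
      rw [hJdef, ← jacobiSum_ringHomComp, hsc, hsc]
    have hJJ : J * (starRingEnd ℂ) J = (Fintype.card F : ℂ) := by
      rw [hconj]
      exact jacobiSum_mul_jacobiSum_inv (χ := χ⁻¹) (φ := χ') hrcne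
        (by simpa using hχ1) hχ'1 hprod1
    have habsJ : ‖J‖ = Real.sqrt (2 ^ n) := by
      have h1 : ‖J‖ ^ 2 = (2 : ℝ) ^ n := by
        have := congrArg norm hJJ
        rw [norm_mul, Complex.norm_conj, Complex.norm_natCast, hcard] at this
        rw [sq, this]; push_cast; ring
      rw [← h1, Real.sqrt_sq (norm_nonneg J)]
    rw [habsJ, hNR]
    congr 1
    rw [Real.sqrt_eq_rpow, ← Real.rpow_natCast 2 n, ← Real.rpow_mul (by norm_num)]
    ring_nf
end
end
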